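/- Let f, g ∈ L^∞. Then the singular integral operator S_{f,g} is normal (S_{f,g}S*_{f,g} = S*_{f,g}S_{f,g}) if and only if one of the following holds: (1) f and g are constant; (2) there exists a unimodular constant λ such that f − λg and λ·conj(f)·g − f·conj(g) are constant. -/

import Mathlib

noncomputable section

open MeasureTheory Complex ComplexConjugate InnerProductSpace ContinuousLinearMap

namespace GSIO

instance : Fact (0 < 2 * Real.pi) := ⟨by positivity⟩

/-- The circle, modeled as `ℝ / 2πℤ`. -/
abbrev Circ : Type := AddCircle (2 * Real.pi)

/-- Normalized Haar (arc-length) measure on the circle. -/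
abbrev μC : Measure Circ := AddCircle.haarAddCircle

/-- `L²` of the circle. -/
abbrev L2 : Type := Lp ℂ 2 μC

/-- `L^∞` of the circle. -/
abbrev Linf : Type := Lp ℂ ⊤ μC

/-- The Hardy space `H²`: those `L²` functions whose negative Fourier coefficients vanish. -/
def Hardy : Submodule ℂ L2 where
  carrier := {f : L2 | ∀ n : ℤ, n < 0 → fourierCoeff (f : Circ → ℂ) n = 0}
  zero_mem' := by
    intro n hn
    rw [← fourierBasis_repr]
    simp
  add_mem' := by
    intro a b ha hb n hn
    have ha' := ha n hn
    have hb' := hb n hn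
    rw [← fourierBasis_repr] at ha' hb' ⊢
    rw [map_add, lp.coeFn_add, Pi.add_apply, ha', hb', add_zero]
  smul_mem' := by
    intro c a ha n hn
    have ha' := ha n hn
    rw [← fourierBasis_repr] at ha' ⊢
    rw [_root_.map_smul, lp.coeFn_smul, Pi.smul_apply, ha', smul_zero]

theorem isClosed_Hardy : IsClosed (Hardy : Set L2) := by
  have h : (Hardy : Set L2) =
      ⋂ n : {m : ℤ // m < 0}, (fun f : L2 =>
        (innerSL ℂ (fourierBasis (T := 2 * Real.pi) n.1)) f) ⁻¹' {0} := by
    ext f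
    simp only [Set.mem_iInter, Set.mem_preimage, Set.mem_singleton_iff, SetLike.mem_coe]
    constructor
    · intro hf n
      have h1 := hf n.1 n.2
      rw [← fourierBasis_repr, fourierBasis.repr_apply_apply] at h1
      simpa using h1
    · intro hf n hn
      have h1 := hf ⟨n, hn⟩
      rw [← fourierBasis_repr, fourierBasis.repr_apply_apply]
      simpa using h1
  rw [h]
  exact isClosed_iInter fun n =>
    isClosed_singleton.preimage (innerSL ℂ _).continuous

instance : CompleteSpace Hardy := isClosed_Hardy.completeSpace_coe

/-- The Riesz projection `P₊`, i.e. the orthogonal projection of `L²` onto `H²`. -/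
def Pp : L2 →L[ℂ] L2 := Hardy.subtypeL.comp (Hardy.orthogonalProjectionOnto)

/-- `P₋ = I − P₊`. -/
def Pm : L2 →L[ℂ] L2 := ContinuousLinearMap.id ℂ L2 - Pp

/-- The pointwise product of an `L^∞` function with an `L²` function, as an `L²` function. -/
def mulFun (φ : Linf) (x : L2) : L2 :=
  ((Lp.memLp x).smul (p := ⊤) (r := 2) (Lp.memLp φ)).toLp ((φ : Circ → ℂ) • (x : Circ → ℂ))

theorem mulFun_add (φ : Linf) (x y : L2) : mulFun φ (x + y) = mulFun φ x + mulFun φ y := by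
  rw [mulFun, mulFun, mulFun, ← MemLp.toLp_add]
  apply MemLp.toLp_congr
  filter_upwards [Lp.coeFn_add x y] with t ht
  have ht' : ((x + y : L2) : Circ → ℂ) t = (x : Circ → ℂ) t + (y : Circ → ℂ) t := by
    simpa using ht
  simp only [Pi.mul_apply, Pi.smul_apply, Pi.add_apply, smul_eq_mul, ht']
  ring

theorem mulFun_smul (c : ℂ) (φ : Linf) (x : L2) : mulFun φ (c • x) = c • mulFun φ x := by
  rw [mulFun, mulFun, ← MemLp.toLp_const_smul]
  apply MemLp.toLp_congr
  filter_upwards [Lp.coeFn_smul c x] with t ht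
  have ht' : ((c • x : L2) : Circ → ℂ) t = c * (x : Circ → ℂ) t := by
    simpa using ht
  simp only [Pi.mul_apply, Pi.smul_apply, smul_eq_mul, ht']
  ring

theorem norm_mulFun_le (φ : Linf) (x : L2) : ‖mulFun φ x‖ ≤ ‖φ‖ * ‖x‖ := by
  rw [mulFun, Lp.norm_toLp]
  have h := eLpNorm_smul_le_eLpNorm_top_mul_eLpNorm (μ := μC) 2
    (Lp.aestronglyMeasurable x) (φ : Circ → ℂ)
  refine le_trans (ENNReal.toReal_mono ?_ h) ?_
  · exact ENNReal.mul_ne_top (Lp.eLpNorm_ne_top φ) (Lp.eLpNorm_ne_top x)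
  · rw [ENNReal.toReal_mul, Lp.norm_def, Lp.norm_def]

/-- The multiplication operator `M_φ` on `L²`, for `φ ∈ L^∞`. -/
def mul (φ : Linf) : L2 →L[ℂ] L2 :=
  LinearMap.mkContinuous
    { toFun := mulFun φ
      map_add' := mulFun_add φ
      map_smul' := fun c x => mulFun_smul c φ x }
    ‖φ‖ (fun x => norm_mulFun_le φ x)

/-- Pointwise product in `L^∞`. -/
def mulInf (φ ψ : Linf) : Linf :=
  ((Lp.memLp ψ).smul (p := ⊤) (r := ⊤) (Lp.memLp φ)).toLp ((φ : Circ → ℂ) • (ψ : Circ → ℂ))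

/-- Complex conjugation on `L^∞`. -/
def conjInf (φ : Linf) : Linf :=
  (show MemLp (fun t => star ((φ : Circ → ℂ) t)) ⊤ μC from
    ⟨continuous_star.comp_aestronglyMeasurable (Lp.aestronglyMeasurable φ), by
      rw [eLpNorm_congr_norm_ae (g := (φ : Circ → ℂ))
        (Filter.Eventually.of_forall fun t => norm_star _)]
      exact Lp.eLpNorm_lt_top φ⟩).toLp _

/-- Complex conjugation on `L²`. -/
def conjL2 (x : L2) : L2 :=
  (show MemLp (fun t => star ((x : Circ → ℂ) t)) 2 μC from
    ⟨continuous_star.comp_aestronglyMeasurable (Lp.aestronglyMeasurable x), by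
      rw [eLpNorm_congr_norm_ae (g := (x : Circ → ℂ))
        (Filter.Eventually.of_forall fun t => norm_star _)]
      exact Lp.eLpNorm_lt_top x⟩).toLp _

/-- The inclusion `L^∞ ⊆ L²` (the measure is finite). -/
def toL2 (φ : Linf) : L2 := ((Lp.memLp φ).mono_exponent le_top).toLp φ

/-- The constant function `c` as an element of `L^∞`. -/
def constInf (c : ℂ) : Linf := (memLp_const c).toLp (fun _ => c)

/-- An `L^∞` function is constant (a.e.). -/
def IsConst (φ : Linf) : Prop := ∃ c : ℂ, φ = constInf c

/-- `φ ∈ H^∞ = L^∞ ∩ H²`: the negative Fourier coefficients of `φ` vanish. -/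
def MemHinf (φ : Linf) : Prop := ∀ n : ℤ, n < 0 → fourierCoeff (φ : Circ → ℂ) n = 0

/-- The coordinate function `z` as an element of `L^∞`. -/
def zInf : Linf := fourierLp (T := 2 * Real.pi) ⊤ 1

/-- The function `z̄` as an element of `L^∞`. -/
def zbarInf : Linf := fourierLp (T := 2 * Real.pi) ⊤ (-1)

/-- The antiunitary operator `V : h ↦ z̄ ⬝ conj h` on `L²`. -/
def Vmap (x : L2) : L2 := mul zbarInf (conjL2 x)

/-- `φ₋ = P₋ φ` for `φ ∈ L^∞`, viewed inside `L²`. -/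
def mI (φ : Linf) : L2 := Pm (toL2 φ)

/-- The rank-one operator `p ⊗ q : x ↦ ⟪x, q⟫ · p` (the inner product being conjugate-linear
in `q`). -/
def rankOne {E : Type*} [NormedAddCommGroup E] [InnerProductSpace ℂ E] (p q : E) : E →L[ℂ] E :=
  (innerSL ℂ q).smulRight p

/-- The Hilbert space direct sum `L² ⊕ L²`. -/
abbrev L2sq : Type := WithLp 2 (L2 × L2)

/-- A pair of `L²` functions, viewed as a vector in `L² ⊕ L²`. -/
def pair (x y : L2) : L2sq := (WithLp.equiv 2 (L2 × L2)).symm (x, y)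

/-- Notation for the pointwise product in `L^∞`. -/
scoped infixl:70 " ⊙ " => GSIO.mulInf

/-- The Toeplitz operator `T_φ = P₊ M_φ P₊` (viewed as acting on the corner `H²` of `L²`). -/
def Toeplitz (φ : Linf) : L2 →L[ℂ] L2 := Pp ∘L mul φ ∘L Pp

/-- The Hankel operator `H_φ = P₋ M_φ P₊ : H² → (H²)^⊥` (as a corner operator on `L²`). -/
def Hankel (φ : Linf) : L2 →L[ℂ] L2 := Pm ∘L mul φ ∘L Pp

/-- The dual Toeplitz operator `T̃_φ = P₋ M_φ P₋` on `(H²)^⊥` (as a corner operator on `L²`). -/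
def dualToeplitz (φ : Linf) : L2 →L[ℂ] L2 := Pm ∘L mul φ ∘L Pm

/-- The generalized Cauchy singular integral operator with symbol `[[f, u], [g, v]]`:
`R x = P₊ f P₊ x + P₋ g P₊ x + P₊ u P₋ x + P₋ v P₋ x`. -/
def Rop (f u g v : Linf) : L2 →L[ℂ] L2 :=
  Pp ∘L mul f ∘L Pp + Pm ∘L mul g ∘L Pp + Pp ∘L mul u ∘L Pm + Pm ∘L mul v ∘L Pm

/-- The singular integral operator `S_{f,g} = M_f P₊ + M_g P₋` on `L²`. -/
def Sop (f g : Linf) : L2 →L[ℂ] L2 := mul f ∘L Pp + mul g ∘L Pm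

/-- Negation `t ↦ -t` preserves the Haar measure of the circle. -/
theorem mp_neg : MeasurePreserving (fun t : Circ => -t) μC μC :=
  Measure.measurePreserving_neg μC

/-- Composition with `t ↦ -t` on `L²`. -/
def reflL2 : L2 →L[ℂ] L2 :=
  (Lp.compMeasurePreservingₗᵢ ℂ (fun t : Circ => -t) mp_neg).toContinuousLinearMap

/-- Composition with `t ↦ -t` on `L^∞`: for `φ ∈ L^∞`, `φ̃(z) = φ(z̄)`. -/
def reflInf (φ : Linf) : Linf := Lp.compMeasurePreserving (fun t : Circ => -t) mp_neg φ

/-- `φ* (z) = conj (φ(z̄))`. -/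
def starInf (φ : Linf) : Linf := conjInf (reflInf φ)

/-- The flip operator `J : (Jh)(z) = z̄ · h(z̄)` on `L²`. -/
def Jop : L2 →L[ℂ] L2 := mul zbarInf ∘L reflL2

/-- The Hankel operator `𝕳_φ = P₊ M_φ J` on `H²` (as a corner operator on `L²`). -/
def HankelPlus (φ : Linf) : L2 →L[ℂ] L2 := Pp ∘L mul φ ∘L Jop ∘L Pp

/-- The adjoint `H*_φ` of the Hankel operator `H_φ`. -/
def HankelAdj (φ : Linf) : L2 →L[ℂ] L2 := ContinuousLinearMap.adjoint (Hankel φ)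

/-- `θ ∈ L^∞` is an inner function: `θ ∈ H^∞` and `|θ| = 1` a.e. -/
def IsInner (θ : Linf) : Prop := MemHinf θ ∧ ∀ᵐ t ∂μC, ‖(θ : Circ → ℂ) t‖ = 1

/-- The orthogonal projection of `L²` onto `K_θ^⊥ = θH² ⊕ z̄·conj(H²)`, namely
`P₋ + M_θ P₊ M_{conj θ}`. -/
def Qproj (θ : Linf) : L2 →L[ℂ] L2 := Pm + mul θ ∘L Pp ∘L mul (conjInf θ)

/-!
Write `P = P₊`, `Q = P₋ = 1 - P` and `D = λ·f̄·g − f·ḡ`. If `|λ| = 1` and `f − λg = c` is constant,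
then `M_f = λM_g + c`, and a computation that only uses `P² = P = P*` and the normality of `M_g`
gives the self-commutator `S S* − S* S = Q M_D P + (Q M_D P)*`. So `S` is then normal iff the
Hankel operator `Q M_D P` vanishes; as `D̄ = −λ̄D`, this happens iff `D` is constant. Constant `f`
and `g` are the case `λ = 1`.

It remains to see that normality forces `f − λg` to be constant. Multiplication by `z̄` commutes
with `P` on `e₀^⊥`, and `‖P h‖² = ‖P(z̄h)‖² + |ĥ(0)|²`. Comparing `‖S* x‖ = ‖S x‖` at `x` and at
`z̄x` for `x ⊥ e₀` gives `|⟪f, x⟫| = |⟪g, x⟫|` on `e₀^⊥`, so the components of `f` and `g` in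
`e₀^⊥` differ by a unimodular factor `λ`.
-/

end GSIO

section InnerProduct

variable {𝕜 E : Type*} [RCLike 𝕜] [NormedAddCommGroup E] [InnerProductSpace 𝕜 E]

local notation "⟪" x ", " y "⟫" => @inner 𝕜 _ _ x y

theorem exists_norm_eq_one_eq_smul_of_norm_inner_eq {u v : E}
    (h : ∀ x, ‖⟪u, x⟫‖ = ‖⟪v, x⟫‖) : ∃ c : 𝕜, ‖c‖ = 1 ∧ u = c • v := by
  by_cases hv : v = 0
  · refine ⟨1, norm_one, ?_⟩
    simpa [hv] using h u
  set a : 𝕜 := ⟪v, u⟫ / ⟪v, v⟫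
  have hvv : ⟪v, v⟫ ≠ 0 := inner_self_ne_zero.mpr hv
  have hvw : ⟪v, u - a • v⟫ = 0 := by
    rw [inner_sub_right, inner_smul_right, div_mul_cancel₀ _ hvv, sub_self]
  have huw : ⟪u, u - a • v⟫ = 0 := norm_eq_zero.mp ((h _).trans (by rw [hvw, norm_zero]))
  have hu : u = a • v := by
    rw [← sub_eq_zero, ← inner_self_eq_zero (𝕜 := 𝕜)]
    nth_rw 1 [inner_sub_left, inner_smul_left, huw, hvw, mul_zero, sub_zero]
  refine ⟨a, ?_, hu⟩
  have := h v
  rw [hu, inner_smul_left, norm_mul, RCLike.norm_conj] at this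
  exact (mul_eq_right₀ (norm_ne_zero_iff.mpr hvv)).mp this

theorem exists_norm_eq_one_sub_smul_mem_orthogonal {K : Submodule 𝕜 E}
    [K.HasOrthogonalProjection] {u v : E} (h : ∀ x ∈ K, ‖⟪u, x⟫‖ = ‖⟪v, x⟫‖) :
    ∃ c : 𝕜, ‖c‖ = 1 ∧ u - c • v ∈ Kᗮ := by
  obtain ⟨c, hc, hproj⟩ :
      ∃ c : 𝕜, ‖c‖ = 1 ∧ K.starProjection u = c • K.starProjection v := by
    refine exists_norm_eq_one_eq_smul_of_norm_inner_eq fun x => ?_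
    simpa only [Submodule.inner_starProjection_left_eq_right] using
      h _ (K.starProjection_apply_mem x)
  refine ⟨c, hc, ?_⟩
  have := Kᗮ.sub_mem (K.sub_starProjection_mem_orthogonal u)
    (Kᗮ.smul_mem c (K.sub_starProjection_mem_orthogonal v))
  rwa [smul_sub, sub_sub_sub_comm, ← hproj, sub_self, sub_zero] at this

end InnerProduct

theorem Complex.conj_mul_self_of_norm_eq_one {l : ℂ} (hl : ‖l‖ = 1) : conj l * l = 1 := by
  rw [Complex.conj_mul', hl, Complex.ofReal_one, one_pow]

section StarRing

variable {A : Type*} [Ring A] [StarRing A]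

theorem mul_star_sub_star_mul_eq [Algebra ℂ A] [StarModule ℂ A] {p a b : A} {l c : ℂ}
    (hp : IsStarProjection p) (hb : IsStarNormal b) (hl : conj l * l = 1)
    (ha : a = l • b + algebraMap ℂ A c) :
    let s := a * p + b * (1 - p)
    let d := l • (star a * b) - a * star b
    s * star s - star s * s = (1 - p) * d * p + star ((1 - p) * d * p) := by
  intro s d
  have hpp : p * p = p := hp.isIdempotentElem
  have hpp' (x : A) : p * (p * x) = p * x := by rw [← mul_assoc, hpp]
  have hbb : star b * b = b * star b := hb.star_comm_self
  have hbb' (x : A) : star b * (b * x) = b * (star b * x) := by rw [← mul_assoc, hbb, mul_assoc]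
  have hl' : star l * l = 1 := hl
  have hl'' : l * star l = 1 := by rw [mul_comm]; exact hl
  simp only [s, d, ha, star_add, star_mul, star_smul, star_sub, star_one, hp.isSelfAdjoint.star_eq,
    Algebra.algebraMap_eq_smul_one, star_star]
  simp only [mul_add, add_mul, mul_sub, sub_mul, smul_mul_assoc, mul_smul_comm, mul_one, one_mul,
    smul_add, smul_sub, smul_smul, mul_assoc, hpp, hpp', hbb, hbb', hl', hl'', one_smul]
  module

theorem IsStarProjection.one_sub_mul_mul_eq_zero_of_add_star_eq_zero {p x : A}
    (hp : IsStarProjection p) (h : (1 - p) * x * p + star ((1 - p) * x * p) = 0) :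
    (1 - p) * x * p = 0 := by
  have hpp : p * p = p := hp.isIdempotentElem
  have hpp' (y : A) : p * (p * y) = p * y := by rw [← mul_assoc, hpp]
  have := congrArg (fun y => (1 - p) * y * p) h
  simp only [star_mul, star_sub, hp.isSelfAdjoint.star_eq, mul_add, add_mul, mul_sub, sub_mul,
    one_mul, mul_assoc, hpp, hpp', sub_self, mul_zero, zero_mul] at this
  simpa [mul_assoc, sub_mul, mul_sub, hpp, hpp'] using this

end StarRing

namespace GSIO

local notation "⟪" x ", " y "⟫" => @inner ℂ _ _ x y

local notation "𝐞" => fourierBasis (T := 2 * Real.pi)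

variable {f g : Linf}

lemma coeFn_mul (φ : Linf) (x : L2) :
    (mul φ x : Circ → ℂ) =ᵐ[μC] fun t => (φ : Circ → ℂ) t * (x : Circ → ℂ) t :=
  MemLp.coeFn_toLp ((Lp.memLp x).smul (p := ⊤) (r := 2) (Lp.memLp φ))

lemma coeFn_conjInf (φ : Linf) :
    (conjInf φ : Circ → ℂ) =ᵐ[μC] fun t => conj ((φ : Circ → ℂ) t) :=
  MemLp.coeFn_toLp _

lemma coeFn_mulInf (φ ψ : Linf) :
    (φ ⊙ ψ : Circ → ℂ) =ᵐ[μC] fun t => (φ : Circ → ℂ) t * (ψ : Circ → ℂ) t :=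
  MemLp.coeFn_toLp _

lemma coeFn_constInf (c : ℂ) : (constInf c : Circ → ℂ) =ᵐ[μC] fun _ => c :=
  MemLp.coeFn_toLp _

lemma isConst_iff_ae_eq (φ : Linf) :
    IsConst φ ↔ ∃ c : ℂ, (φ : Circ → ℂ) =ᵐ[μC] fun _ => c := by
  refine exists_congr fun c => ⟨fun h => h ▸ coeFn_constInf c, fun h => ?_⟩
  exact Lp.ext (h.trans (coeFn_constInf c).symm)

lemma mul_sub_symbol (φ ψ : Linf) : mul (φ - ψ) = mul φ - mul ψ := by
  ext1 x
  refine Lp.ext ?_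
  filter_upwards [coeFn_mul (φ - ψ) x, Lp.coeFn_sub (mul φ x) (mul ψ x), coeFn_mul φ x,
    coeFn_mul ψ x, Lp.coeFn_sub φ ψ] with t h h₁ h₂ h₃ h₄
  simp only [sub_apply, h, h₁, Pi.sub_apply, h₂, h₃, h₄, sub_mul]

lemma mul_smul_symbol (c : ℂ) (φ : Linf) : mul (c • φ) = c • mul φ := by
  ext1 x
  refine Lp.ext ?_
  filter_upwards [coeFn_mul (c • φ) x, Lp.coeFn_smul c (mul φ x), coeFn_mul φ x,
    Lp.coeFn_smul c φ] with t h h₁ h₂ h₃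
  simp only [smul_apply, h, h₁, Pi.smul_apply, h₂, h₃, smul_eq_mul, mul_assoc]

lemma mul_constInf (c : ℂ) : mul (constInf c) = algebraMap ℂ (L2 →L[ℂ] L2) c := by
  ext1 x
  refine Lp.ext ?_
  filter_upwards [coeFn_mul (constInf c) x, coeFn_constInf c, Lp.coeFn_smul c x]
    with t h h₁ h₂
  simp only [Algebra.algebraMap_eq_smul_one, smul_apply,
    one_apply_eq_self, h, h₁, h₂, Pi.smul_apply, smul_eq_mul]

lemma mul_mulInf (φ ψ : Linf) : mul (φ ⊙ ψ) = mul φ * mul ψ := by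
  ext1 x
  refine Lp.ext ?_
  filter_upwards [coeFn_mul (φ ⊙ ψ) x, coeFn_mul φ (mul ψ x), coeFn_mul ψ x,
    coeFn_mulInf φ ψ] with t h h₁ h₂ h₃
  simp only [mul_apply_eq_comp, h, h₁, h₂, h₃, mul_assoc]

lemma commute_mul (φ ψ : Linf) : Commute (mul φ) (mul ψ) := by
  ext1 x
  refine Lp.ext ?_
  filter_upwards [coeFn_mul φ (mul ψ x), coeFn_mul ψ (mul φ x), coeFn_mul φ x,
    coeFn_mul ψ x] with t h₁ h₂ h₃ h₄
  simp only [mul_apply_eq_comp, h₁, h₂, h₃, h₄, mul_left_comm]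

lemma adjoint_mul (φ : Linf) : adjoint (mul φ) = mul (conjInf φ) := by
  refine ((ContinuousLinearMap.eq_adjoint_iff _ _).mpr fun x y => ?_).symm
  rw [MeasureTheory.L2.inner_def, MeasureTheory.L2.inner_def]
  refine integral_congr_ae ?_
  filter_upwards [coeFn_mul φ y, coeFn_mul (conjInf φ) x, coeFn_conjInf φ] with t h₁ h₂ h₃
  simp only [RCLike.inner_apply, h₁, h₂, h₃, map_mul, Complex.conj_conj]
  ring

lemma star_mul_eq_mul_conjInf (φ : Linf) : star (mul φ) = mul (conjInf φ) := adjoint_mul φ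

lemma mul_mul_zbarInf (φ : Linf) (x : L2) : mul φ (mul zbarInf x) = mul zbarInf (mul φ x) :=
  congrArg (· x) (commute_mul φ zbarInf).eq

lemma inner_fourierBasis (j k : ℤ) : ⟪𝐞 j, 𝐞 k⟫ = if j = k then 1 else 0 :=
  orthonormal_iff_ite.mp fourierBasis.orthonormal j k

lemma fourierBasis_ext {T T' : L2 →L[ℂ] L2} (h : ∀ k, T (𝐞 k) = T' (𝐞 k)) : T = T' := by
  refine ContinuousLinearMap.ext_on ?_ (s := Set.range 𝐞) (by rintro _ ⟨k, rfl⟩; exact h k)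
  rw [Submodule.dense_iff_topologicalClosure_eq_top]
  exact fourierBasis.dense_span

lemma coeFn_fourierBasis (k : ℤ) : (𝐞 k : Circ → ℂ) =ᵐ[μC] fun t => fourier k t := by
  rw [coe_fourierBasis]
  exact coeFn_fourierLp 2 k

lemma mul_fourierLp_fourierBasis (n k : ℤ) : mul (fourierLp ⊤ n) (𝐞 k) = 𝐞 (n + k) := by
  refine Lp.ext ?_
  filter_upwards [coeFn_mul (fourierLp ⊤ n) (𝐞 k), coeFn_fourierLp (T := 2 * Real.pi) ⊤ n,
    coeFn_fourierBasis k, coeFn_fourierBasis (n + k)] with t h h₁ h₂ h₃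
  rw [h, h₁, h₂, h₃, fourier_add]

lemma conjInf_fourierLp (n : ℤ) : conjInf (fourierLp ⊤ n) = fourierLp ⊤ (-n) := by
  refine Lp.ext ?_
  filter_upwards [coeFn_conjInf (fourierLp ⊤ n), coeFn_fourierLp (T := 2 * Real.pi) ⊤ n,
    coeFn_fourierLp (T := 2 * Real.pi) ⊤ (-n)] with t h h₁ h₂
  rw [h, h₁, h₂, fourier_neg]

lemma norm_mul_fourierLp (n : ℤ) (x : L2) : ‖mul (fourierLp ⊤ n) x‖ = ‖x‖ := by
  have hunitary : adjoint (mul (fourierLp ⊤ n)) ∘L mul (fourierLp ⊤ n) = 1 :=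
    fourierBasis_ext fun k => by
      rw [comp_apply, adjoint_mul, conjInf_fourierLp, mul_fourierLp_fourierBasis,
        mul_fourierLp_fourierBasis, neg_add_cancel_left, one_apply_eq_self]
  rw [← sq_eq_sq₀ (norm_nonneg _) (norm_nonneg _), ← inner_self_eq_norm_sq (𝕜 := ℂ),
    ← inner_self_eq_norm_sq (𝕜 := ℂ), ← adjoint_inner_right, ← comp_apply, hunitary,
    one_apply_eq_self]

lemma fourierBasis_mem_Hardy {k : ℤ} (hk : 0 ≤ k) : 𝐞 k ∈ Hardy := fun n hn => by
  rw [← fourierBasis_repr, fourierBasis.repr_apply_apply, inner_fourierBasis, if_neg (by omega)]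

lemma fourierBasis_mem_orthogonal_Hardy {k : ℤ} (hk : k < 0) : 𝐞 k ∈ Hardyᗮ := fun u hu => by
  rw [← inner_conj_symm, ← fourierBasis.repr_apply_apply, fourierBasis_repr, hu k hk, map_zero]

lemma Pp_eq_starProjection : Pp = Hardy.starProjection := rfl

lemma Pp_fourierBasis (k : ℤ) : Pp (𝐞 k) = if 0 ≤ k then 𝐞 k else 0 := by
  rw [Pp_eq_starProjection]
  split_ifs with hk
  · exact Hardy.starProjection_eq_self_iff.mpr (fourierBasis_mem_Hardy hk)
  · exact Hardy.starProjection_apply_eq_zero_iff.mpr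
      (fourierBasis_mem_orthogonal_Hardy (by omega))

lemma rankOne_apply (p q x : L2) : rankOne p q x = ⟪q, x⟫ • p := rfl

lemma mul_zbarInf_comp_Pp :
    mul zbarInf ∘L Pp = Pp ∘L mul zbarInf + rankOne (𝐞 (-1)) (𝐞 0) :=
  fourierBasis_ext fun k => by
    simp only [zbarInf, add_apply, comp_apply, rankOne_apply, Pp_fourierBasis,
      mul_fourierLp_fourierBasis, inner_fourierBasis]
    rcases lt_trichotomy k 0 with hk | rfl | hk
    · simp [-coe_fourierBasis, hk.not_ge, show ¬ 0 ≤ -1 + k by omega, hk.ne']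
    · simp [-coe_fourierBasis, mul_fourierLp_fourierBasis]
    · simp [-coe_fourierBasis, mul_fourierLp_fourierBasis, hk.le, show 0 ≤ -1 + k by omega,
        hk.ne]

lemma Pp_mul_zbarInf_of_inner_eq_zero {x : L2} (hx : ⟪𝐞 0, x⟫ = 0) :
    Pp (mul zbarInf x) = mul zbarInf (Pp x) := by
  simpa [-coe_fourierBasis, rankOne_apply, hx] using (congrArg (· x) mul_zbarInf_comp_Pp).symm

lemma norm_Pp_sq (h : L2) :
    ‖Pp h‖ ^ 2 = ‖Pp (mul zbarInf h)‖ ^ 2 + ‖⟪𝐞 0, h⟫‖ ^ 2 := by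
  have horth : ⟪Pp (mul zbarInf h), ⟪𝐞 0, h⟫ • 𝐞 (-1)⟫ = 0 := by
    rw [inner_smul_right, Pp_eq_starProjection, Submodule.inner_starProjection_left_eq_right,
      ← Pp_eq_starProjection, Pp_fourierBasis, if_neg (by omega), inner_zero_right, mul_zero]
  rw [← norm_mul_fourierLp (-1) (Pp h), ← zbarInf, ← comp_apply, mul_zbarInf_comp_Pp, add_apply,
    comp_apply, rankOne_apply]
  simp only [sq, norm_add_sq_eq_norm_sq_add_norm_sq_of_inner_eq_zero _ _ horth, norm_smul,
    fourierBasis.orthonormal.1, mul_one]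

lemma Pm_eq_starProjection : Pm = Hardyᗮ.starProjection := by
  ext1 x
  rw [Submodule.starProjection_orthogonal_val, ← Pp_eq_starProjection]
  rfl

lemma Sop_eq_mul : Sop f g = mul f * Pp + mul g * (1 - Pp) := rfl

lemma adjoint_Sop : adjoint (Sop f g) = Pp ∘L mul (conjInf f) + Pm ∘L mul (conjInf g) := by
  rw [Sop, map_add, adjoint_comp, adjoint_comp, adjoint_mul, adjoint_mul,
    Pp_eq_starProjection, Pm_eq_starProjection, (isSelfAdjoint_starProjection _).adjoint_eq,
    (isSelfAdjoint_starProjection _).adjoint_eq]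

lemma norm_adjoint_Sop_sq (y : L2) :
    ‖adjoint (Sop f g) y‖ ^ 2 = ‖Pp (mul (conjInf f) y)‖ ^ 2 - ‖Pp (mul (conjInf g) y)‖ ^ 2
      + ‖mul (conjInf g) y‖ ^ 2 := by
  set a := mul (conjInf f) y
  set b := mul (conjInf g) y
  have horth : ⟪Pp a, Pm b⟫ = 0 := by
    rw [Pp_eq_starProjection, Pm_eq_starProjection]
    exact Submodule.inner_right_of_mem_orthogonal (Submodule.starProjection_apply_mem _ _)
      (Submodule.starProjection_apply_mem _ _)
  have hb := Submodule.norm_sq_eq_add_norm_sq_starProjection b Hardy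
  rw [← Pp_eq_starProjection, ← Pm_eq_starProjection] at hb
  rw [adjoint_Sop, add_apply, comp_apply, comp_apply, sq, sq,
    norm_add_sq_eq_norm_sq_add_norm_sq_of_inner_eq_zero _ _ horth]
  linear_combination -hb

lemma Sop_mul_zbarInf_of_inner_eq_zero {x : L2} (hx : ⟪𝐞 0, x⟫ = 0) :
    Sop f g (mul zbarInf x) = mul zbarInf (Sop f g x) := by
  simp only [Sop_eq_mul, add_apply, mul_apply_eq_comp, sub_apply, one_apply_eq_self,
    Pp_mul_zbarInf_of_inner_eq_zero hx, mul_mul_zbarInf, map_add, map_sub]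

lemma norm_inner_mul_fourierBasis_zero_eq (hN : IsStarNormal (Sop f g)) {x : L2}
    (hx : ⟪𝐞 0, x⟫ = 0) : ‖⟪mul f (𝐞 0), x⟫‖ = ‖⟪mul g (𝐞 0), x⟫‖ := by
  have hnorm := isStarNormal_iff_norm_eq_adjoint.mp hN
  have hshift : ‖adjoint (Sop f g) x‖ ^ 2 = ‖adjoint (Sop f g) (mul zbarInf x)‖ ^ 2 := by
    rw [← hnorm, ← hnorm, Sop_mul_zbarInf_of_inner_eq_zero hx, zbarInf, norm_mul_fourierLp]
  have hinner (φ : Linf) : ⟪𝐞 0, mul (conjInf φ) x⟫ = ⟪mul φ (𝐞 0), x⟫ := by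
    rw [← adjoint_mul, adjoint_inner_right]
  rw [norm_adjoint_Sop_sq, norm_adjoint_Sop_sq, norm_Pp_sq (mul (conjInf f) x),
    norm_Pp_sq (mul (conjInf g) x), mul_mul_zbarInf, mul_mul_zbarInf, zbarInf, norm_mul_fourierLp,
    hinner, hinner] at hshift
  rw [← sq_eq_sq₀ (norm_nonneg _) (norm_nonneg _)]
  linear_combination hshift

lemma isConst_of_mul_fourierBasis_zero {φ : Linf} {c : ℂ} (h : mul φ (𝐞 0) = c • 𝐞 0) :
    IsConst φ := by
  refine (isConst_iff_ae_eq φ).mpr ⟨c, ?_⟩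
  filter_upwards [coeFn_mul φ (𝐞 0), Lp.coeFn_smul c (𝐞 0), coeFn_fourierBasis 0]
    with t h₁ h₂ h₃
  rw [h, h₂, Pi.smul_apply, h₃, fourier_zero, smul_eq_mul, mul_one, mul_one] at h₁
  exact h₁.symm

lemma exists_isConst_sub_smul (hN : IsStarNormal (Sop f g)) :
    ∃ l : ℂ, ‖l‖ = 1 ∧ IsConst (f - l • g) := by
  obtain ⟨l, hl, hmem⟩ := exists_norm_eq_one_sub_smul_mem_orthogonal (K := (ℂ ∙ 𝐞 0)ᗮ)
    (u := mul f (𝐞 0)) (v := mul g (𝐞 0)) fun _ hx =>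
      norm_inner_mul_fourierBasis_zero_eq hN
        (Submodule.mem_orthogonal_singleton_iff_inner_right.mp hx)
  rw [Submodule.orthogonal_orthogonal, Submodule.mem_span_singleton] at hmem
  obtain ⟨c, hc⟩ := hmem
  refine ⟨l, hl, isConst_of_mul_fourierBasis_zero (c := c) ?_⟩
  rw [mul_sub_symbol, mul_smul_symbol, sub_apply, smul_apply, hc]

lemma Hankel_eq_mul (φ : Linf) : Hankel φ = (1 - Pp) * mul φ * Pp := by
  rw [mul_assoc]; rfl

lemma Hankel_smul (c : ℂ) (φ : Linf) : Hankel (c • φ) = c • Hankel φ := by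
  simp only [Hankel_eq_mul, mul_smul_symbol, smul_mul_assoc, mul_smul_comm]

lemma mul_fourierBasis_zero_mem_Hardy {φ : Linf} (h : Hankel φ = 0) : mul φ (𝐞 0) ∈ Hardy := by
  have h₀ := congrArg (· (𝐞 0)) h
  simp only [Hankel, comp_apply, zero_apply, Pp_fourierBasis, le_refl, if_true,
    Pm_eq_starProjection, Submodule.starProjection_apply_eq_zero_iff,
    Submodule.orthogonal_orthogonal] at h₀
  exact h₀

lemma isConst_of_Hankel_eq_zero {φ : Linf} (h : Hankel φ = 0) (h' : Hankel (conjInf φ) = 0) :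
    IsConst φ := by
  have hcoeff (ψ : Linf) (hψ : Hankel ψ = 0) {n : ℤ} (hn : n < 0) : ⟪𝐞 n, mul ψ (𝐞 0)⟫ = 0 := by
    rw [← fourierBasis.repr_apply_apply, fourierBasis_repr]
    exact mul_fourierBasis_zero_mem_Hardy hψ n hn
  have hshift (n : ℤ) : ⟪𝐞 (-n), mul (conjInf φ) (𝐞 0)⟫ = conj ⟪𝐞 n, mul φ (𝐞 0)⟫ := by
    rw [← adjoint_mul, adjoint_inner_right, ← add_zero (-n), ← mul_fourierLp_fourierBasis,
      ← mul_apply_eq_comp, (commute_mul _ _).eq, mul_apply_eq_comp, ← conjInf_fourierLp,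
      ← adjoint_mul, adjoint_inner_left, mul_fourierLp_fourierBasis, add_zero, inner_conj_symm]
  refine isConst_of_mul_fourierBasis_zero (c := ⟪𝐞 0, mul φ (𝐞 0)⟫) ?_
  refine fourierBasis.repr.injective (lp.ext (funext fun n => ?_))
  simp only [fourierBasis.repr_apply_apply, inner_smul_right, inner_fourierBasis]
  rcases lt_trichotomy n 0 with hn | rfl | hn
  · rw [hcoeff φ h hn, if_neg hn.ne, mul_zero]
  · rw [if_pos rfl, mul_one]
  · rw [if_neg hn.ne', mul_zero, ← conj_conj ⟪𝐞 n, _⟫, ← hshift, hcoeff _ h' (by omega), map_zero]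

def crossSymbol (l : ℂ) (f g : Linf) : Linf := l • (conjInf f ⊙ g) - f ⊙ conjInf g

lemma conjInf_crossSymbol {l : ℂ} (hl : ‖l‖ = 1) :
    conjInf (crossSymbol l f g) = (-conj l) • crossSymbol l f g := by
  rw [crossSymbol]
  refine Lp.ext ?_
  filter_upwards [coeFn_conjInf (l • (conjInf f ⊙ g) - f ⊙ conjInf g),
    Lp.coeFn_sub (l • (conjInf f ⊙ g)) (f ⊙ conjInf g), Lp.coeFn_smul l (conjInf f ⊙ g),
    coeFn_mulInf (conjInf f) g, coeFn_mulInf f (conjInf g), coeFn_conjInf f, coeFn_conjInf g,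
    Lp.coeFn_smul (-conj l) (l • (conjInf f ⊙ g) - f ⊙ conjInf g)]
    with t h₁ h₂ h₃ h₄ h₅ h₆ h₇ h₈
  rw [h₁, h₈, Pi.smul_apply, h₂, Pi.sub_apply, h₃, Pi.smul_apply, h₄, h₅, h₆, h₇]
  simp only [smul_eq_mul, map_sub, map_mul, conj_conj]
  linear_combination
    (conj ((f : Circ → ℂ) t) * (g : Circ → ℂ) t) * Complex.conj_mul_self_of_norm_eq_one hl

lemma Sop_mul_star_sub_star_mul {l c : ℂ} (hl : ‖l‖ = 1) (hc : f - l • g = constInf c) :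
    Sop f g * star (Sop f g) - star (Sop f g) * Sop f g
      = Hankel (crossSymbol l f g) + star (Hankel (crossSymbol l f g)) := by
  have ha : mul f = l • mul g + algebraMap ℂ _ c := by
    rw [← mul_constInf, ← hc, mul_sub_symbol, mul_smul_symbol, add_sub_cancel]
  have hD : mul (crossSymbol l f g) = l • (star (mul f) * mul g) - mul f * star (mul g) := by
    rw [crossSymbol, mul_sub_symbol, mul_smul_symbol, mul_mulInf, mul_mulInf,
      star_mul_eq_mul_conjInf, star_mul_eq_mul_conjInf]
  rw [Hankel_eq_mul, hD]
  exact mul_star_sub_star_mul_eq (isStarProjection_starProjection)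
    ⟨by rw [star_mul_eq_mul_conjInf]; exact commute_mul _ _⟩
    (Complex.conj_mul_self_of_norm_eq_one hl) ha

lemma isConst_sub_of_isConst (hf : IsConst f) (hg : IsConst g) : IsConst (f - (1 : ℂ) • g) := by
  obtain ⟨a, ha⟩ := (isConst_iff_ae_eq f).mp hf
  obtain ⟨b, hb⟩ := (isConst_iff_ae_eq g).mp hg
  refine (isConst_iff_ae_eq _).mpr ⟨a - b, ?_⟩
  filter_upwards [Lp.coeFn_sub f ((1 : ℂ) • g), Lp.coeFn_smul (1 : ℂ) g, ha, hb]
    with t h₁ h₂ h₃ h₄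
  rw [h₁, Pi.sub_apply, h₂, Pi.smul_apply, h₃, h₄, one_smul]

lemma isConst_crossSymbol_one_of_isConst (hf : IsConst f) (hg : IsConst g) :
    IsConst (crossSymbol 1 f g) := by
  rw [crossSymbol]
  obtain ⟨a, ha⟩ := (isConst_iff_ae_eq f).mp hf
  obtain ⟨b, hb⟩ := (isConst_iff_ae_eq g).mp hg
  refine (isConst_iff_ae_eq _).mpr ⟨conj a * b - a * conj b, ?_⟩
  filter_upwards [Lp.coeFn_sub ((1 : ℂ) • (conjInf f ⊙ g)) (f ⊙ conjInf g),
    Lp.coeFn_smul (1 : ℂ) (conjInf f ⊙ g), coeFn_mulInf (conjInf f) g, coeFn_mulInf f (conjInf g),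
    coeFn_conjInf f, coeFn_conjInf g, ha, hb] with t h₁ h₂ h₃ h₄ h₅ h₆ h₇ h₈
  rw [h₁, Pi.sub_apply, h₂, Pi.smul_apply, h₃, h₄, h₅, h₆, h₇, h₈, one_smul]

lemma Hankel_eq_zero_of_add_star_eq_zero {φ : Linf} (h : Hankel φ + star (Hankel φ) = 0) :
    Hankel φ = 0 := by
  rw [Hankel_eq_mul] at h ⊢
  exact isStarProjection_starProjection.one_sub_mul_mul_eq_zero_of_add_star_eq_zero h

lemma Hankel_eq_zero_of_isConst {φ : Linf} (h : IsConst φ) : Hankel φ = 0 := by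
  obtain ⟨c, rfl⟩ := h
  rw [Hankel_eq_mul, mul_constInf, ← Algebra.commutes, mul_assoc, Pp_eq_starProjection,
    isStarProjection_starProjection.isIdempotentElem.one_sub_mul_self, mul_zero]

/-- `S_{f,g}` is normal iff `f` and `g` are constants or there is a
unimodular constant `λ` such that `f − λg` and `λ·conj(f)·g − f·conj(g)` are constants. -/
theorem statement17 (f g : Linf) :
    Sop f g ∘L ContinuousLinearMap.adjoint (Sop f g) =
        ContinuousLinearMap.adjoint (Sop f g) ∘L Sop f g ↔
      (IsConst f ∧ IsConst g) ∨
        (∃ lam : ℂ, ‖lam‖ = 1 ∧ IsConst (f - lam • g) ∧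
          IsConst (lam • (conjInf f ⊙ g) - f ⊙ conjInf g)) := by
  change Sop f g * star (Sop f g) = star (Sop f g) * Sop f g ↔
    _ ∨ ∃ l : ℂ, ‖l‖ = 1 ∧ IsConst (f - l • g) ∧ IsConst (crossSymbol l f g)
  rw [← sub_eq_zero]
  refine ⟨fun hN => Or.inr ?_, fun h => ?_⟩
  · obtain ⟨l, hl, c, hc⟩ := exists_isConst_sub_smul ⟨(sub_eq_zero.mp hN).symm⟩
    have hH := Hankel_eq_zero_of_add_star_eq_zero ((Sop_mul_star_sub_star_mul hl hc).symm.trans hN)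
    refine ⟨l, hl, ⟨c, hc⟩, isConst_of_Hankel_eq_zero hH ?_⟩
    rw [conjInf_crossSymbol hl, Hankel_smul, hH, smul_zero]
  · obtain ⟨l, hl, ⟨c, hc⟩, hD⟩ := h.elim (fun ⟨hf, hg⟩ =>
      ⟨1, norm_one, isConst_sub_of_isConst hf hg, isConst_crossSymbol_one_of_isConst hf hg⟩) id
    rw [Sop_mul_star_sub_star_mul hl hc, Hankel_eq_zero_of_isConst hD, star_zero, add_zero]

end GSIO
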